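/- Let α < β be real numbers, γ > 0, and σ > 0. Let Q and E be independent real random variables where Q has CDF F_Q(y) = 0 for y < α, F_Q(y) = 1 − ((β − y)/(β − α))^{γ/2} for α ≤ y ≤ β, and F_Q(y) = 1 for y > β, and E is normally distributed with mean 0 and standard deviation σ. Then the CDF of Y = Q + E satisfies, for every real y, F_Y(y) = Φ((y − α)/σ) − ∫_0^1 v^{γ/2} · (1/s)·φ((v − m)/s) dv, where m = (β − y)/(β − α), s = σ/(β − α), Φ is the standard normal CDF, and φ is the standard normal density. -/

import Mathlib

/-!
Conditioning on `E`, `P(Q + E ≤ y) = ∫ F_Q(y - e) dN(0, σ²)(e)`, and `F_Q(y - e)` is the indicator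
of `e ≤ y - α` minus `((β - y + e)/(β - α))^{γ/2}` on `y - β < e ≤ y - α`. The first part integrates
to `Φ((y - α)/σ)`; the substitution `e = (β - α) v + (y - β)` turns the second into the integral
over `[0, 1]`.
-/

open MeasureTheory ProbabilityTheory Set

/-- The standard normal density `φ(u) = (2π)^{-1/2} e^{-u²/2}`. -/
noncomputable def stdNormalPDF (u : ℝ) : ℝ :=
  (Real.sqrt (2 * Real.pi))⁻¹ * Real.exp (-(u ^ 2) / 2)

/-- The standard normal CDF `Φ(t) = ∫_{-∞}^t φ(u) du`. -/
noncomputable def stdNormalCDF (t : ℝ) : ℝ :=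
  ∫ u in Set.Iic t, stdNormalPDF u

theorem measureReal_add_le_eq_integral {Ω : Type*} [MeasurableSpace Ω] {P : Measure Ω}
    [IsFiniteMeasure P] {X Y : Ω → ℝ} (hX : Measurable X) (hY : Measurable Y)
    (hXY : IndepFun X Y P) (y : ℝ) :
    P.real {ω | X ω + Y ω ≤ y} = ∫ e, P.real {ω | X ω ≤ y - e} ∂(P.map Y) := by
  have hS : MeasurableSet {p : ℝ × ℝ | p.1 + p.2 ≤ y} := by measurability
  have hF : Antitone fun e => P.map X (Iic (y - e)) :=
    fun e e' he => measure_mono (Iic_subset_Iic.2 (by linarith))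
  have hmap : P.map (fun ω => (X ω, Y ω)) = (P.map X).prod (P.map Y) :=
    (indepFun_iff_map_prod_eq_prod_map_map hX.aemeasurable hY.aemeasurable).1 hXY
  calc P.real {ω | X ω + Y ω ≤ y}
      = (P.map (fun ω => (X ω, Y ω))).real {p | p.1 + p.2 ≤ y} := by
        rw [map_measureReal_apply (hX.prodMk hY) hS]; rfl
    _ = (∫⁻ e, P.map X (Iic (y - e)) ∂(P.map Y)).toReal := by
        rw [hmap, measureReal_def, Measure.prod_apply_symm hS]
        congr 1
        refine lintegral_congr fun e => congrArg _ ?_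
        ext q; simp [le_sub_iff_add_le]
    _ = ∫ e, P.real {ω | X ω ≤ y - e} ∂(P.map Y) := by
        rw [← integral_toReal hF.measurable.aemeasurable
          (ae_of_all _ fun _ => measure_lt_top _ _)]
        simp_rw [Measure.map_apply hX measurableSet_Iic]
        rfl

theorem gaussianPDFReal_zero_eq_stdNormalPDF {σ : ℝ} (hσ : 0 < σ) (x : ℝ) :
    gaussianPDFReal 0 ⟨σ ^ 2, sq_nonneg σ⟩ x = σ⁻¹ * stdNormalPDF (x / σ) := by
  show (Real.sqrt (2 * Real.pi * σ ^ 2))⁻¹ * Real.exp (-(x - 0) ^ 2 / (2 * σ ^ 2)) = _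
  rw [stdNormalPDF, Real.sqrt_mul (by positivity),
    Real.sqrt_sq hσ.le, mul_inv, sub_zero, div_pow]
  ring_nf

theorem setIntegral_Iic_stdNormalPDF_div {σ : ℝ} (hσ : 0 < σ) (c : ℝ) :
    ∫ e in Iic c, σ⁻¹ * stdNormalPDF (e / σ) = stdNormalCDF (c / σ) := by
  have hscale := Measure.setIntegral_comp_smul_of_pos volume stdNormalPDF (Iic c) (inv_pos.2 hσ)
  simp only [smul_eq_mul, Module.finrank_self, pow_one, inv_inv,
    LinearOrderedField.smul_Iic (inv_pos.2 hσ)] at hscale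
  rw [integral_const_mul, stdNormalCDF]
  simp_rw [div_eq_inv_mul, hscale]
  field_simp

noncomputable def concaveQuadCDF (α β γ y : ℝ) : ℝ :=
  if y < α then 0 else if y ≤ β then 1 - ((β - y) / (β - α)) ^ (γ / 2) else 1

theorem concaveQuadCDF_sub_eq_indicator {α β γ : ℝ} (hγ : γ ≠ 0) (y e : ℝ) :
    concaveQuadCDF α β γ (y - e) = (Iic (y - α)).indicator 1 e -
      (Ioc (y - β) (y - α)).indicator (fun e => ((β - y + e) / (β - α)) ^ (γ / 2)) e := by
  unfold concaveQuadCDF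
  by_cases hα : e ≤ y - α
  · by_cases hβ : y - β < e
    · rw [if_neg (by linarith), if_pos (by linarith), indicator_of_mem (by exact hα),
        indicator_of_mem (by exact ⟨hβ, hα⟩), Pi.one_apply, sub_sub_eq_add_sub,
        add_sub_right_comm]
    · rw [if_neg (by linarith), indicator_of_mem (by exact hα),
        indicator_of_notMem (fun h => hβ h.1), Pi.one_apply, sub_zero]
      split_ifs with h
      · rw [show β - (y - e) = 0 by linarith, zero_div, Real.zero_rpow (by simpa), sub_zero]
      · rfl
  · rw [if_pos (by linarith), indicator_of_notMem (by exact hα),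
      indicator_of_notMem (fun h => hα h.2), sub_zero]

theorem integral_mul_concaveQuadCDF_sub {α β γ : ℝ} (hγ : 0 < γ) {g : ℝ → ℝ}
    (hg : Integrable g) (y : ℝ) :
    ∫ e, g e * concaveQuadCDF α β γ (y - e) =
      (∫ e in Iic (y - α), g e) -
        ∫ e in Ioc (y - β) (y - α), ((β - y + e) / (β - α)) ^ (γ / 2) * g e := by
  have hw : Continuous fun e : ℝ => ((β - y + e) / (β - α)) ^ (γ / 2) := by
    fun_prop (disch := positivity)
  have hwg : IntegrableOn (fun e => ((β - y + e) / (β - α)) ^ (γ / 2) * g e)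
      (Ioc (y - β) (y - α)) :=
    hg.integrableOn.continuousOn_mul_of_subset hw.continuousOn isCompact_Icc measurableSet_Ioc
      Ioc_subset_Icc_self
  simp_rw [concaveQuadCDF_sub_eq_indicator hγ.ne', mul_sub, ← indicator_mul_right, Pi.one_apply,
    mul_one, mul_comm (g _)]
  rw [integral_sub (hg.indicator measurableSet_Iic) (hwg.integrable_indicator measurableSet_Ioc),
    integral_indicator measurableSet_Iic, integral_indicator measurableSet_Ioc]

theorem setIntegral_Ioc_eq_intervalIntegral_zero_one {a b : ℝ} (hab : a < b) (f : ℝ → ℝ) :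
    ∫ x in Ioc a b, f x = ∫ v in (0 : ℝ)..1, (b - a) * f ((b - a) * v + a) := by
  have hba : b - a ≠ 0 := sub_ne_zero.2 hab.ne'
  rw [intervalIntegral.integral_const_mul, intervalIntegral.integral_comp_mul_add f hba,
    smul_eq_mul, mul_inv_cancel_left₀ hba, mul_zero, zero_add, mul_one, sub_add_cancel,
    intervalIntegral.integral_of_le hab.le]

/-- If `Q` has the concave quadratic distribution with parameters
`α < β`, `γ > 0`, and `E` is an independent normal with mean `0` and standard deviation
`σ > 0`, then the CDF of `Y = Q + E` is
`F_Y(y) = Φ((y−α)/σ) − ∫_0^1 v^{γ/2}·(1/s)·φ((v−m)/s) dv`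
with `m = (β−y)/(β−α)` and `s = σ/(β−α)`. -/
theorem stmt5 (α β γ σ : ℝ) (hab : α < β) (hγ : 0 < γ) (hσ : 0 < σ)
    {Ω : Type*} [MeasurableSpace Ω] (P : MeasureTheory.Measure Ω) [IsProbabilityMeasure P]
    (Q E : Ω → ℝ) (hQm : Measurable Q) (hEm : Measurable E)
    (hindep : IndepFun Q E P)
    (hQ : ∀ y : ℝ, (P {ω | Q ω ≤ y}).toReal =
      if y < α then 0 else if y ≤ β then 1 - ((β - y) / (β - α)) ^ (γ / 2) else 1)
    (hE : P.map E = gaussianReal 0 ⟨σ ^ 2, sq_nonneg σ⟩) :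
    ∀ y : ℝ,
      (P {ω | Q ω + E ω ≤ y}).toReal =
        stdNormalCDF ((y - α) / σ) -
          ∫ v in (0 : ℝ)..1,
            v ^ (γ / 2) *
              ((1 / (σ / (β - α))) *
                stdNormalPDF ((v - (β - y) / (β - α)) / (σ / (β - α)))) := by
  intro y
  have hv : (⟨σ ^ 2, sq_nonneg σ⟩ : NNReal) ≠ 0 := by
    simpa [← NNReal.coe_ne_zero] using hσ.ne'
  have hpdf := funext (gaussianPDFReal_zero_eq_stdNormalPDF hσ)
  have hg : Integrable fun e => σ⁻¹ * stdNormalPDF (e / σ) :=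
    hpdf ▸ integrable_gaussianPDFReal _ _
  have hba : β - α ≠ 0 := sub_ne_zero.2 hab.ne'
  have hsubst (v : ℝ) : (β - α) * (((β - y + ((β - α) * v + (y - β))) / (β - α)) ^ (γ / 2) *
      (σ⁻¹ * stdNormalPDF (((β - α) * v + (y - β)) / σ))) =
      v ^ (γ / 2) *
        ((1 / (σ / (β - α))) * stdNormalPDF ((v - (β - y) / (β - α)) / (σ / (β - α)))) := by
    have hbase : (β - y + ((β - α) * v + (y - β))) / (β - α) = v := by field_simp; ring
    have harg : ((β - α) * v + (y - β)) / σ = (v - (β - y) / (β - α)) / (σ / (β - α)) := by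
      field_simp; ring
    rw [hbase, harg]
    field_simp
  calc (P {ω | Q ω + E ω ≤ y}).toReal
      = ∫ e, (P {ω | Q ω ≤ y - e}).toReal ∂(P.map E) :=
        measureReal_add_le_eq_integral hQm hEm hindep y
    _ = ∫ e, σ⁻¹ * stdNormalPDF (e / σ) * concaveQuadCDF α β γ (y - e) := by
        rw [hE, integral_gaussianReal_eq_integral_smul hv, hpdf]
        simp_rw [hQ, smul_eq_mul]
        rfl
    _ = _ := integral_mul_concaveQuadCDF_sub hγ hg y
    _ = _ := by
        rw [setIntegral_Iic_stdNormalPDF_div hσ,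
          setIntegral_Ioc_eq_intervalIntegral_zero_one (by linarith)]
        simp_rw [show y - α - (y - β) = β - α by ring, hsubst]
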